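/- arXiv:2412.07232 — 7 statements merged into one kernel-verified Lean document; each statement's English description precedes it below -/
import Mathlib

section
/- Let A ∈ ℝ^{n×n}, B ∈ ℝ^{n×m}, and let X₀ ∈ ℝ^{n×T}, U₀ ∈ ℝ^{m×T}, X₁ ∈ ℝ^{n×T} be matrices satisfying X₁ = A·X₀ + B·U₀. If Q ∈ ℝ^{T×n} satisfies X₀·Q = I_n, and we define K = U₀·Q, then A + B·K = X₁·Q. -/
open Matrix

theorem stmt_0 {n m T : ℕ}
    (A : Matrix (Fin n) (Fin n) ℝ) (B : Matrix (Fin n) (Fin m) ℝ)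
    (X0 : Matrix (Fin n) (Fin T) ℝ) (U0 : Matrix (Fin m) (Fin T) ℝ)
    (X1 : Matrix (Fin n) (Fin T) ℝ)
    (hdata : X1 = A * X0 + B * U0)
    (Q : Matrix (Fin T) (Fin n) ℝ) (hQ : X0 * Q = 1) :
    A + B * (U0 * Q) = X1 * Q := by
  subst hdata
  rw [Matrix.add_mul, Matrix.mul_assoc, Matrix.mul_assoc, hQ, Matrix.mul_one]
end

section
/- Let A ∈ ℝ^{n×n}, B ∈ ℝ^{n×m}, X₀ ∈ ℝ^{n×T}, U₀ ∈ ℝ^{m×T}, X₁ ∈ ℝ^{n×T} with X₁ = A·X₀ + B·U₀, and Q ∈ ℝ^{T×n} with X₀·Q = I_n. Define the closed-loop map f(x) = (A + B·U₀·Q)·x. Then for every k ∈ ℕ and every x ∈ ℝⁿ, the k-fold iterate f^[k](x) equals (X₁·Q)^k · x. -/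
open Matrix

theorem stmt_1 {n m T : ℕ}
    (A : Matrix (Fin n) (Fin n) ℝ) (B : Matrix (Fin n) (Fin m) ℝ)
    (X0 : Matrix (Fin n) (Fin T) ℝ) (U0 : Matrix (Fin m) (Fin T) ℝ)
    (X1 : Matrix (Fin n) (Fin T) ℝ)
    (hdata : X1 = A * X0 + B * U0)
    (Q : Matrix (Fin T) (Fin n) ℝ) (hQ : X0 * Q = 1)
    (f : (Fin n → ℝ) → (Fin n → ℝ))
    (hf : ∀ x, f x = (A + B * (U0 * Q)).mulVec x) :
    ∀ (k : ℕ) (x : Fin n → ℝ), f^[k] x = ((X1 * Q) ^ k).mulVec x := by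
  have key : X1 * Q = A + B * (U0 * Q) := by
    rw [hdata, Matrix.add_mul, Matrix.mul_assoc, hQ, mul_one, Matrix.mul_assoc]
  intro k
  induction k with
  | zero => intro x; simp
  | succ k ih =>
    intro x
    rw [Function.iterate_succ_apply', ih, hf, key, pow_succ', mulVec_mulVec]
end

section
/- Consider a discrete-time system x⁺ = f(x, u) with state space X ⊆ ℝⁿ, initial set X_I ⊆ X, unsafe set X_U ⊆ X, and a feedback controller g : X → U. Suppose B : X → ℝ≥0, constants k ∈ ℕ with k ≥ 1, γ, λ, ε ≥ 0 with λ > γ + (k−1)·ε, satisfy: (1) B(x) ≤ γ for all x ∈ X_I; (2) B(x) ≥ λ for all x ∈ X_U; (3) for all x ∈ X, B(f(x, g(x))) ≤ B(x) + ε; (4) for all x ∈ X, B applied to the k-fold closed-loop iterate of x satisfies B(F^[k](x)) ≤ B(x), where F(x) = f(x, g(x)). Assume further that the closed loop is forward invariant in X (F(x) ∈ X for all x ∈ X) and X_I ⊆ X. Then every closed-loop trajectory x(t+1) = F(x(t)) starting from x(0) ∈ X_I satisfies x(t) ∉ X_U for all t ∈ ℕ. -/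
theorem stmt_2 {n m : ℕ}
    (X XI XU : Set (Fin n → ℝ)) (hXI : XI ⊆ X) (hXU : XU ⊆ X)
    (f : (Fin n → ℝ) → (Fin m → ℝ) → (Fin n → ℝ))
    (g : (Fin n → ℝ) → (Fin m → ℝ))
    (F : (Fin n → ℝ) → (Fin n → ℝ)) (hF : ∀ x, F x = f x (g x))
    (hInv : ∀ x ∈ X, F x ∈ X)
    (B : (Fin n → ℝ) → ℝ) (hBnn : ∀ x, 0 ≤ B x)
    (k : ℕ) (hk : 1 ≤ k) (γ lam ε : ℝ)
    (hγ : 0 ≤ γ) (hlam : 0 ≤ lam) (hε : 0 ≤ ε)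
    (hgap : γ + ((k : ℝ) - 1) * ε < lam)
    (h1 : ∀ x ∈ XI, B x ≤ γ)
    (h2 : ∀ x ∈ XU, lam ≤ B x)
    (h3 : ∀ x ∈ X, B (F x) ≤ B x + ε)
    (h4 : ∀ x ∈ X, B (F^[k] x) ≤ B x)
    (x : ℕ → (Fin n → ℝ)) (hx0 : x 0 ∈ XI)
    (hxs : ∀ t, x (t + 1) = F (x t)) :
    ∀ t : ℕ, x t ∉ XU := by
  have hX : ∀ t, x t ∈ X := by
    intro t
    induction t with
    | zero => exact hXI hx0
    | succ t ih => rw [hxs t]; exact hInv _ ih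
  have hiter : ∀ s j, x (s + j) = F^[j] (x s) := by
    intro s j
    induction j with
    | zero => simp
    | succ j ih =>
      rw [← Nat.add_assoc, hxs, ih, Function.iterate_succ_apply']
  have key : ∀ t, B (x t) ≤ γ + ((t % k : ℕ) : ℝ) * ε := by
    intro t
    induction t using Nat.strong_induction_on with
    | _ t ih =>
      rcases Nat.lt_or_ge t k with hlt | hge
      · rcases Nat.eq_zero_or_pos t with rfl | hpos
        · simpa using h1 _ hx0
        · obtain ⟨s, rfl⟩ : ∃ s, t = s + 1 := ⟨t - 1, by omega⟩
          have hs : B (x s) ≤ γ + ((s % k : ℕ) : ℝ) * ε := ih s (Nat.lt_succ_self s)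
          have hsm : s % k = s := Nat.mod_eq_of_lt (Nat.lt_of_succ_lt hlt)
          have htm : (s + 1) % k = s + 1 := Nat.mod_eq_of_lt hlt
          rw [hsm] at hs
          rw [htm, hxs s]
          have := h3 _ (hX s)
          push_cast
          linarith
      · obtain ⟨s, rfl⟩ := Nat.exists_eq_add_of_le hge
        have hxt : x (k + s) = F^[k] (x s) := by rw [Nat.add_comm]; exact hiter s k
        have hb : B (x (k + s)) ≤ B (x s) := hxt ▸ h4 _ (hX s)
        have hs : B (x s) ≤ γ + ((s % k : ℕ) : ℝ) * ε :=
          ih s (by omega)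
        have hm : (k + s) % k = s % k := Nat.add_mod_left k s
        rw [hm]
        linarith
  intro t ht
  have h := h2 _ ht
  have hb := key t
  have hmod : ((t % k : ℕ) : ℝ) ≤ (k : ℝ) - 1 := by
    have := Nat.mod_lt t (show 0 < k by omega)
    have : t % k ≤ k - 1 := by omega
    have := (Nat.cast_le (α := ℝ)).2 this
    push_cast [Nat.cast_sub hk] at this
    linarith
  have : B (x t) ≤ γ + ((k : ℝ) - 1) * ε := by nlinarith
  linarith
end

section
/- Under the hypotheses of the k-inductive barrier certificate theorem (B(x(0)) ≤ γ; B(F(x)) ≤ B(x) + ε for all x ∈ X; B(F^[k](x)) ≤ B(x) for all x ∈ X; F maps X into X; x(0) ∈ X), the closed-loop trajectory x(t+1) = F(x(t)) satisfies B(x(t)) ≤ γ + (k−1)·ε for all t ∈ ℕ. -/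
theorem stmt_3 {n : ℕ}
    (X : Set (Fin n → ℝ))
    (F : (Fin n → ℝ) → (Fin n → ℝ)) (hInv : ∀ x ∈ X, F x ∈ X)
    (B : (Fin n → ℝ) → ℝ)
    (k : ℕ) (hk : 1 ≤ k) (γ ε : ℝ) (hγ : 0 ≤ γ) (hε : 0 ≤ ε)
    (h3 : ∀ x ∈ X, B (F x) ≤ B x + ε)
    (h4 : ∀ x ∈ X, B (F^[k] x) ≤ B x)
    (x : ℕ → (Fin n → ℝ)) (hx0X : x 0 ∈ X) (hx0 : B (x 0) ≤ γ)
    (hxs : ∀ t, x (t + 1) = F (x t)) :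
    ∀ t : ℕ, B (x t) ≤ γ + ((k : ℝ) - 1) * ε := by
  have hX : ∀ t, x t ∈ X := by
    intro t
    induction t with
    | zero => exact hx0X
    | succ t ih => rw [hxs t]; exact hInv _ ih
  have hiter : ∀ t m, x (t + m) = F^[m] (x t) := by
    intro t m
    induction m with
    | zero => simp
    | succ m ih =>
      rw [← Nat.add_assoc, hxs, ih, Function.iterate_succ_apply']
  have key : ∀ t, B (x t) ≤ γ + (t % k : ℕ) * ε := by
    intro t
    induction t using Nat.strong_induction_on with
    | _ t ih =>
      rcases lt_or_ge t k with h | h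
      · -- t < k, so t % k = t; induct stepwise
        rw [Nat.mod_eq_of_lt h]
        clear ih
        induction t with
        | zero => simpa using hx0
        | succ t ih2 =>
          have ht : t < k := Nat.lt_of_succ_lt h
          rw [hxs t]
          calc B (F (x t)) ≤ B (x t) + ε := h3 _ (hX t)
            _ ≤ γ + t * ε + ε := by linarith [ih2 ht]
            _ = γ + (t + 1 : ℕ) * ε := by push_cast; ring
      · -- t ≥ k
        obtain ⟨m, rfl⟩ := Nat.exists_eq_add_of_le h
        have h1 : x (k + m) = F^[k] (x m) := by
          rw [Nat.add_comm]; exact hiter m k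
        have h2 : B (x (k + m)) ≤ B (x m) := h1 ▸ h4 _ (hX m)
        have h3' : (k + m) % k = m % k := by
          simp [Nat.add_mod_left]
        have hm : m < k + m := Nat.lt_add_of_pos_left (Nat.lt_of_lt_of_le Nat.zero_lt_one hk)
        calc B (x (k + m)) ≤ B (x m) := h2
          _ ≤ γ + (m % k : ℕ) * ε := ih m hm
          _ = γ + ((k + m) % k : ℕ) * ε := by rw [h3']
  intro t
  have := key t
  have hmod : (t % k : ℕ) ≤ k - 1 := Nat.le_sub_one_of_lt (Nat.mod_lt t hk)
  have : ((t % k : ℕ) : ℝ) ≤ (k : ℝ) - 1 := by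
    have := (Nat.cast_le (α := ℝ)).mpr hmod
    push_cast [hk] at this ⊢
    linarith
  nlinarith [key t, mul_le_mul_of_nonneg_right this hε]
end

section
/- Consider a map F : X → X on a set X ⊆ ℝⁿ, a function B : X → ℝ, an integer k ≥ 1, and constants γ, λ, ε ≥ 0 with λ > γ + (k−1)·ε. Suppose: B(x) ≤ γ for all x ∈ X_I ⊆ X; for all x ∈ X, B(F(x)) ≤ B(x) + ε; and for all x ∈ X, B(F^[k](x)) ≤ B(x). Then for any x₀ ∈ X_I and any t ∈ ℕ, writing t = q·k + r with 0 ≤ r < k, one has B(F^[t](x₀)) ≤ γ + r·ε. -/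
theorem stmt_11 {n : ℕ}
    (X XI : Set (Fin n → ℝ)) (hXI : XI ⊆ X)
    (F : (Fin n → ℝ) → (Fin n → ℝ)) (hInv : ∀ x ∈ X, F x ∈ X)
    (B : (Fin n → ℝ) → ℝ)
    (k : ℕ) (hk : 1 ≤ k) (γ lam ε : ℝ) (hγ : 0 ≤ γ) (hlam : 0 ≤ lam) (hε : 0 ≤ ε)
    (hgap : γ + ((k : ℝ) - 1) * ε < lam)
    (h1 : ∀ x ∈ XI, B x ≤ γ)
    (h3 : ∀ x ∈ X, B (F x) ≤ B x + ε)
    (h4 : ∀ x ∈ X, B (F^[k] x) ≤ B x) :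
    ∀ x0 ∈ XI, ∀ t q r : ℕ, t = q * k + r → r < k →
      B (F^[t] x0) ≤ γ + (r : ℝ) * ε := by
  intro x0 hx0 t q r ht hr
  have hmem : ∀ m : ℕ, F^[m] x0 ∈ X := by
    intro m
    induction m with
    | zero => exact hXI hx0
    | succ m ih => rw [Function.iterate_succ_apply']; exact hInv _ ih
  have aux1 : ∀ r : ℕ, B (F^[r] x0) ≤ γ + (r : ℝ) * ε := by
    intro r
    induction r with
    | zero => simpa using h1 x0 hx0
    | succ r ih =>
      rw [Function.iterate_succ_apply']
      calc B (F (F^[r] x0)) ≤ B (F^[r] x0) + ε := h3 _ (hmem r)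
        _ ≤ γ + (r : ℝ) * ε + ε := by linarith
        _ = γ + ((r : ℕ) + 1 : ℝ) * ε := by ring
        _ = γ + ((r + 1 : ℕ) : ℝ) * ε := by push_cast; ring
  have aux2 : ∀ q r : ℕ, B (F^[q * k + r] x0) ≤ B (F^[r] x0) := by
    intro q r
    induction q with
    | zero => simp
    | succ q ih =>
      have : (q + 1) * k + r = k + (q * k + r) := by ring
      rw [this, Function.iterate_add_apply]
      exact le_trans (h4 _ (hmem _)) ih
  subst ht
  exact le_trans (aux2 q r) (aux1 r)
end

section
/- Let A ∈ ℝ^{n×n}, B ∈ ℝ^{n×m}, and suppose data matrices satisfy X₁ = A·X₀ + B·U₀ with X₀·Q = I_n for some Q ∈ ℝ^{T×n}. Let P be symmetric positive definite with (X₁Q)ᵀ·P·(X₁Q) ⪯ P + εI for some ε ≥ 0 (meaning xᵀQᵀX₁ᵀPX₁Qx ≤ xᵀPx + ε·xᵀx for all x). Then for the controller u = U₀Qx and any x ∈ ℝⁿ, (Ax + Bu)ᵀP(Ax + Bu) ≤ xᵀPx + ε·xᵀx. -/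
open Matrix

theorem stmt_14 {n m T : ℕ}
    (A : Matrix (Fin n) (Fin n) ℝ) (B : Matrix (Fin n) (Fin m) ℝ)
    (X0 : Matrix (Fin n) (Fin T) ℝ) (U0 : Matrix (Fin m) (Fin T) ℝ)
    (X1 : Matrix (Fin n) (Fin T) ℝ)
    (hdata : X1 = A * X0 + B * U0)
    (Q : Matrix (Fin T) (Fin n) ℝ) (hQ : X0 * Q = 1)
    (P : Matrix (Fin n) (Fin n) ℝ) (hP : P.PosDef) (ε : ℝ) (hε : 0 ≤ ε)
    (hdec : ∀ x : Fin n → ℝ,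
      ((X1 * Q).mulVec x) ⬝ᵥ P.mulVec ((X1 * Q).mulVec x) ≤ x ⬝ᵥ P.mulVec x + ε * (x ⬝ᵥ x)) :
    ∀ x : Fin n → ℝ,
      (A.mulVec x + B.mulVec ((U0 * Q).mulVec x)) ⬝ᵥ
          P.mulVec (A.mulVec x + B.mulVec ((U0 * Q).mulVec x)) ≤
        x ⬝ᵥ P.mulVec x + ε * (x ⬝ᵥ x) := by
  have key : X1 * Q = A + B * (U0 * Q) := by
    rw [hdata, Matrix.add_mul, Matrix.mul_assoc, hQ, Matrix.mul_one, Matrix.mul_assoc]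
  intro x
  have h := hdec x
  rw [key] at h
  simpa [add_mulVec, mulVec_mulVec, Matrix.mul_assoc] using h
end

section
/- Let F : ℝⁿ → ℝⁿ, B : ℝⁿ → ℝ, and suppose for some k ≥ 1: B(F^[k](x)) ≤ B(x) for all x, and B(F(x)) ≤ B(x) + ε for all x, with ε ≥ 0. Then for all j with 0 ≤ j ≤ k−1 and all x, B(F^[j](x)) ≤ B(x) + j·ε, and for all t ∈ ℕ, B(F^[t](x)) ≤ B(x) + (k−1)·ε. -/
theorem stmt_15 {n : ℕ}
    (F : (Fin n → ℝ) → (Fin n → ℝ)) (B : (Fin n → ℝ) → ℝ)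
    (k : ℕ) (hk : 1 ≤ k) (ε : ℝ) (hε : 0 ≤ ε)
    (h4 : ∀ x, B (F^[k] x) ≤ B x)
    (h3 : ∀ x, B (F x) ≤ B x + ε) :
    (∀ j : ℕ, j ≤ k - 1 → ∀ x, B (F^[j] x) ≤ B x + (j : ℝ) * ε) ∧
      (∀ (t : ℕ) (x : Fin n → ℝ), B (F^[t] x) ≤ B x + ((k : ℝ) - 1) * ε) := by
  have hstep : ∀ j : ℕ, ∀ x, B (F^[j] x) ≤ B x + (j : ℝ) * ε := by
    intro j
    induction j with
    | zero => intro x; simp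
    | succ m ih =>
      intro x
      have h1 : B (F^[m+1] x) ≤ B (F^[m] x) + ε := by
        rw [Function.iterate_succ_apply']
        exact h3 _
      have := ih x
      push_cast
      linarith
  have hblock : ∀ q : ℕ, ∀ x, B (F^[q * k] x) ≤ B x := by
    intro q
    induction q with
    | zero => intro x; simp
    | succ m ih =>
      intro x
      have : F^[(m+1) * k] x = F^[m * k] (F^[k] x) := by
        rw [← Function.iterate_add_apply]; ring_nf
      rw [this]
      exact le_trans (ih _) (h4 x)
  constructor
  · intro j hj x
    exact hstep j x
  · intro t x
    have hkpos : 0 < k := hk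
    obtain ⟨q, r, hr, ht⟩ : ∃ q r, r < k ∧ t = q * k + r :=
      ⟨t / k, t % k, Nat.mod_lt _ hkpos, by rw [Nat.div_add_mod' t k]⟩
    subst ht
    rw [add_comm, Function.iterate_add_apply]
    calc B (F^[r] (F^[q*k] x)) ≤ B (F^[q*k] x) + (r : ℝ) * ε := hstep r _
      _ ≤ B x + (r : ℝ) * ε := by linarith [hblock q x]
      _ ≤ B x + ((k : ℝ) - 1) * ε := by
          have : (r : ℝ) ≤ (k : ℝ) - 1 := by
            have : (r : ℝ) + 1 ≤ k := by exact_mod_cast hr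
            linarith
          nlinarith
end
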